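/- arXiv:1609.00170 — 4 statements merged into one kernel-verified Lean document; each statement's English description precedes it below -/
import Mathlib

section
/- Let d ≥ 1, β ∈ (0,1), and set ζ = ((d+1) - (d-1)β² - √(((d+1)² - (d-1)²β²)(1 - β²)))/(2β). Then the quantity S = (1/β)·(β - ζ)/(1 - βζ) satisfies 0 < S < 1, and S → 1 as β → 1⁻. -/
/-!
With `Q = √(((d+1)² - (d-1)²β²)(1-β²))` one has `β - ζ = (Q - (d+1)(1-β²))/(2β)` and
`1 - βζ = (Q - (d-1)(1-β²))/2`; rationalising with the value of `Q²` turns `S` into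
`2d / (d + 1 + (d-1)β² + Q)`. Since `Q > (d-1)(1-β²)` (because `(d+1)² > (d-1)²`), this denominator
exceeds `2d` on `(0,1)`, and it tends to `2d` as `β → 1`.
-/

open Filter Real

lemma sub_one_mul_one_sub_sq_lt_sqrt {d β : ℝ} (hd : 0 < d) (hβ : β ^ 2 < 1) :
    (d - 1) * (1 - β ^ 2) < √(((d + 1) ^ 2 - (d - 1) ^ 2 * β ^ 2) * (1 - β ^ 2)) := by
  apply Real.lt_sqrt_of_sq_lt
  have : 0 < d * (1 - β ^ 2) := mul_pos hd (by linarith)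
  linarith

lemma blaschke_ratio_eq {d β q : ℝ} (hd : 0 < d) (hβ : β ≠ 0)
    (hq : q ^ 2 = ((d + 1) ^ 2 - (d - 1) ^ 2 * β ^ 2) * (1 - β ^ 2))
    (hqd : (d - 1) * (1 - β ^ 2) < q) :
    1 / β * ((β - ((d + 1) - (d - 1) * β ^ 2 - q) / (2 * β)) /
        (1 - β * (((d + 1) - (d - 1) * β ^ 2 - q) / (2 * β)))) =
      2 * d / (d + 1 + (d - 1) * β ^ 2 + q) := by
  have hnum : β - ((d + 1) - (d - 1) * β ^ 2 - q) / (2 * β) =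
      (q - (d + 1) * (1 - β ^ 2)) / (2 * β) := by
    field_simp; ring
  have hden : 1 - β * (((d + 1) - (d - 1) * β ^ 2 - q) / (2 * β)) =
      (q - (d - 1) * (1 - β ^ 2)) / 2 := by
    field_simp; ring
  rw [hnum, hden]
  field_simp
  rw [div_eq_div_iff (by linarith) (by linarith)]
  linear_combination hq

theorem blaschke_ratio_S (d : ℕ) (hd : 1 ≤ d)
    (ζ : ℝ → ℝ)
    (hζ : ζ = fun β => ((d + 1 : ℝ) - (d - 1 : ℝ) * β ^ 2 -
        Real.sqrt (((d + 1 : ℝ) ^ 2 - (d - 1 : ℝ) ^ 2 * β ^ 2) * (1 - β ^ 2))) / (2 * β))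
    (S : ℝ → ℝ)
    (hS : S = fun β => (1 / β) * ((β - ζ β) / (1 - β * ζ β))) :
    (∀ β ∈ Set.Ioo (0:ℝ) 1, 0 < S β ∧ S β < 1) ∧
      Tendsto S (nhdsWithin 1 (Set.Iio 1)) (nhds 1) := by
  have hd_pos : (0 : ℝ) < d := by exact_mod_cast hd
  set g : ℝ → ℝ := fun β =>
    2 * d / (d + 1 + (d - 1) * β ^ 2 + √(((d + 1) ^ 2 - (d - 1) ^ 2 * β ^ 2) * (1 - β ^ 2)))
  have hSg : ∀ β ∈ Set.Ioo (0 : ℝ) 1, S β = g β := by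
    rintro β ⟨hβ0, hβ1⟩
    have hβ : β ^ 2 < 1 := by nlinarith
    rw [hS, hζ]
    refine blaschke_ratio_eq hd_pos hβ0.ne' (Real.sq_sqrt ?_)
      (sub_one_mul_one_sub_sq_lt_sqrt hd_pos hβ)
    exact mul_nonneg (by nlinarith) (by linarith)
  refine ⟨fun β hβ => ?_, ?_⟩
  · rw [hSg β hβ]
    have hQ := sub_one_mul_one_sub_sq_lt_sqrt hd_pos (by nlinarith [hβ.1, hβ.2] : β ^ 2 < 1)
    exact ⟨div_pos (by positivity) (by linarith), (div_lt_one (by linarith)).2 (by linarith)⟩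
  · have hg : ContinuousAt g 1 := by
      refine ContinuousAt.div (by fun_prop) (by fun_prop) ?_
      norm_num
      positivity
    have hg1 : g 1 = 1 := by
      norm_num [g]
      field_simp
      ring
    refine Tendsto.congr' ?_ (hg1 ▸ hg.tendsto.mono_left nhdsWithin_le_nhds)
    filter_upwards [Ioo_mem_nhdsLT zero_lt_one] with β hβ using (hSg β hβ).symm
end

section
/- K_n ≥ 1 for all n ≥ 3, where K_n = sup{S(B) : B ∈ 𝔅(n)} and S(B) = min{|B(ζ)/(ζ B'(0))| : B'(ζ) = 0, ζ ∈ D}. -/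
/-!
Take the zeros of `B` other than `0` to be the `N = n - 1` roots of `w ^ N = -a`, `0 < a < 1`.
Then `B w = w (w ^ N + a) / (1 + a w ^ N)`, and the critical points of `B` in the disk are the
solutions of `w ^ N = t`, where `t ∈ (-1, 0)` is the root in the disk of the palindromic
quadratic `a s ^ 2 + ((N + 1) - a ^ 2 (N - 1)) s + a` coming from the numerator of `B'`.
At each of them `B ζ / (ζ B'(0)) = (t + a) / (a (1 + a t))`, which tends to `1` as `a → 1`:
with `u = 1 + a t` one has `u - (t + a) = (1 - a)(1 - t)`, while `u ^ 2 ≳ (1 - a) / N`.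
-/

open Complex Polynomial Finset

lemma exists_palindromic_quadratic_root_mem_Ioo {a c : ℝ} (ha : 0 < a) (hc : 2 * a < c) :
    ∃ t ∈ Set.Ioo (-1 : ℝ) 0, a * t ^ 2 + c * t + a = 0 := by
  have hcont : ContinuousOn (fun t : ℝ => a * t ^ 2 + c * t + a) (Set.Icc (-1) 0) := by fun_prop
  have hsign : (0 : ℝ) ∈ Set.Ioo (a * (-1) ^ 2 + c * (-1) + a) (a * 0 ^ 2 + c * 0 + a) :=
    ⟨by linarith, by simpa using ha⟩
  exact intermediate_value_Ioo (by norm_num) hcont hsign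

lemma one_sub_lt_div_of_palindromic_root {m a t ε : ℝ} (hm : 1 ≤ m) (ha : 1 / 2 ≤ a)
    (ha1 : a < 1) (ht : t ∈ Set.Ioo (-1 : ℝ) 0)
    (hq : a * t ^ 2 + ((m + 1) - a ^ 2 * (m - 1)) * t + a = 0)
    (hε : 0 < ε) (haε : 8 * (1 - a) * (m + 1) < ε ^ 2) :
    1 - ε < (t + a) / (a * (1 + a * t)) := by
  obtain ⟨ht1, ht0⟩ := ht
  have hnt : 0 < -t := neg_pos.2 ht0
  have h1a : 0 < 1 - a := sub_pos.2 ha1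
  set u := 1 + a * t
  set v := t + a
  have hu : 0 < u := by nlinarith
  have huv : v * u = m * (-t) * (1 - a ^ 2) := by linear_combination hq
  have hv : 0 < v := by
    refine pos_of_mul_pos_left (huv ▸ mul_pos (mul_pos (by linarith) hnt) ?_) hu.le
    nlinarith
  have ht_low : a ≤ (m + 1) * (-t) := by
    nlinarith [mul_nonneg (mul_nonneg hnt.le (sq_nonneg a)) (sub_nonneg.2 hm),
      mul_nonneg (by linarith : (0 : ℝ) ≤ a) (sq_nonneg t)]
  have hu_sq : 1 - a ≤ 2 * (m + 1) * u ^ 2 := by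
    have h1 : v * u ≤ u ^ 2 := by
      nlinarith [mul_nonneg hu.le (mul_nonneg h1a.le (by linarith : (0 : ℝ) ≤ 1 - t))]
    have h2 : (-t) * (1 - a) ≤ m * (-t) * (1 - a ^ 2) := by
      nlinarith [mul_nonneg (mul_nonneg hnt.le h1a.le) (by nlinarith : (0 : ℝ) ≤ m * (1 + a) - 1)]
    nlinarith [mul_le_mul_of_nonneg_right ht_low h1a.le]
  have hgap : 2 * (1 - a) < ε * u := by
    refine (pow_lt_pow_iff_left₀ (by linarith) (by positivity) two_ne_zero).mp ?_
    nlinarith [mul_le_mul_of_nonneg_left hu_sq (by positivity : (0 : ℝ) ≤ 4 * (1 - a)),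
      mul_lt_mul_of_pos_right haε (by positivity : (0 : ℝ) < u ^ 2)]
  have hratio : 1 - ε < v / u := by
    rw [lt_div_iff₀ hu]
    nlinarith
  calc 1 - ε < v / u := hratio
    _ ≤ v / (a * u) := div_le_div_of_nonneg_left hv.le (by positivity) (by nlinarith)

lemma exists_palindromic_root_one_sub_lt_div {m ε : ℝ} (hm : 1 ≤ m) (hε : 0 < ε) :
    ∃ a t : ℝ, 0 < a ∧ a < 1 ∧ t ∈ Set.Ioo (-1 : ℝ) 0 ∧
      a * t ^ 2 + ((m + 1) - a ^ 2 * (m - 1)) * t + a = 0 ∧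
      1 - ε < (t + a) / (a * (1 + a * t)) := by
  have hδ : 0 < ε ^ 2 / (16 * (m + 1)) := by positivity
  set a := max (1 / 2) (1 - ε ^ 2 / (16 * (m + 1)))
  have ha : 1 / 2 ≤ a := le_max_left _ _
  have ha1 : a < 1 := max_lt (by norm_num) (by linarith)
  have haε : 8 * (1 - a) * (m + 1) < ε ^ 2 := by
    have h : 1 - a ≤ ε ^ 2 / (16 * (m + 1)) := by
      linarith [le_max_right (1 / 2 : ℝ) (1 - ε ^ 2 / (16 * (m + 1)))]
    rw [le_div_iff₀ (by linarith)] at h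
    nlinarith [sq_pos_of_pos hε]
  have hc : 2 * a < (m + 1) - a ^ 2 * (m - 1) := by
    have h : 0 < (1 - a) * ((m + 1) + (m - 1) * a) := mul_pos (by linarith) (by nlinarith)
    linarith
  obtain ⟨t, ht, hq⟩ := exists_palindromic_quadratic_root_mem_Ioo (by linarith) hc
  exact ⟨a, t, by linarith, ha1, ht, hq, one_sub_lt_div_of_palindromic_root hm ha ha1 ht hq hε haε⟩

lemma IsPrimitiveRoot.prod_range_sub_pow_mul {R : Type*} [CommRing R] [IsDomain R] {ζ : R}
    {N : ℕ} (hζ : IsPrimitiveRoot ζ N) (hN : N ≠ 0) (x y : R) :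
    ∏ i ∈ range N, (x - ζ ^ i * y) = x ^ N - y ^ N := by
  have h := congrArg (eval x) (X_pow_sub_C_eq_prod hζ (Nat.pos_of_ne_zero hN) (rfl : y ^ N = _))
  simpa [eval_prod] using h.symm

lemma Complex.exists_pow_eq_of_norm_lt_one {N : ℕ} (hN : N ≠ 0) {x : ℂ} (hx : ‖x‖ < 1) :
    ∃ w : ℂ, w ^ N = x ∧ ‖w‖ < 1 := by
  refine ⟨x ^ (N⁻¹ : ℂ), cpow_nat_inv_pow x hN, ?_⟩
  rwa [← pow_lt_one_iff_of_nonneg (norm_nonneg _) hN, ← norm_pow, cpow_nat_inv_pow x hN]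

noncomputable def symmetricBlaschke (N : ℕ) (a : ℝ) (w : ℂ) : ℂ :=
  w * (w ^ N + a) / (1 + a * w ^ N)

lemma blaschke_eq_symmetricBlaschke {N : ℕ} (hN : N ≠ 0) {ζ α : ℂ} (hζ : IsPrimitiveRoot ζ N)
    {a : ℝ} (hα : α ^ N = -a) :
    (fun w => w * ∏ k : Fin N, (w - ζ ^ (k : ℕ) * α) / (1 - starRingEnd ℂ (ζ ^ (k : ℕ) * α) * w))
      = symmetricBlaschke N a := by
  have hζ' : IsPrimitiveRoot (starRingEnd ℂ ζ) N := hζ.map_of_injective (starRingEnd ℂ).injective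
  funext w
  have hden : ∏ k : Fin N, (1 - starRingEnd ℂ (ζ ^ (k : ℕ) * α) * w) = 1 + a * w ^ N := by
    simp_rw [map_mul, map_pow, mul_assoc]
    rw [Fin.prod_univ_eq_prod_range (fun i => 1 - starRingEnd ℂ ζ ^ i * (starRingEnd ℂ α * w)),
      hζ'.prod_range_sub_pow_mul hN, mul_pow, ← map_pow, hα]
    simp
  rw [prod_div_distrib, hden, Fin.prod_univ_eq_prod_range (fun i => w - ζ ^ i * α),
    hζ.prod_range_sub_pow_mul hN, hα, symmetricBlaschke, sub_neg_eq_add, mul_div_assoc]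

lemma one_add_mul_pow_ne_zero {N : ℕ} {a : ℝ} (ha : |a| < 1) {w : ℂ} (hw : ‖w‖ < 1) :
    1 + a * w ^ N ≠ 0 := by
  have hlt : ‖(a : ℂ) * w ^ N‖ < 1 := by
    rw [norm_mul, norm_pow, norm_real, Real.norm_eq_abs]
    exact mul_lt_one_of_nonneg_of_lt_one_left (abs_nonneg a) ha
      (pow_le_one₀ (norm_nonneg w) hw.le)
  intro h
  rw [← neg_eq_of_add_eq_zero_right h, norm_neg, norm_one] at hlt
  exact hlt.false

lemma hasDerivAt_symmetricBlaschke {N : ℕ} (hN : N ≠ 0) {a : ℝ} {w : ℂ}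
    (hw : 1 + a * w ^ N ≠ 0) :
    HasDerivAt (symmetricBlaschke N a)
      ((a + ((N + 1) - a ^ 2 * (N - 1)) * w ^ N + a * (w ^ N) ^ 2) / (1 + a * w ^ N) ^ 2) w := by
  obtain ⟨M, rfl⟩ : ∃ M, N = M + 1 := ⟨N - 1, by omega⟩
  have hnum : HasDerivAt (fun x : ℂ => x * (x ^ (M + 1) + a))
      ((w ^ (M + 1) + a) + w * ((M + 1) * w ^ M)) w := by
    simpa using (hasDerivAt_id' w).fun_mul ((hasDerivAt_pow (M + 1) w).add_const (a : ℂ))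
  have hden : HasDerivAt (fun x : ℂ => 1 + a * x ^ (M + 1)) (a * ((M + 1) * w ^ M)) w := by
    simpa using ((hasDerivAt_pow (M + 1) w).const_mul (a : ℂ)).const_add 1
  refine (hnum.div hden hw).congr_deriv ?_
  push_cast
  ring

lemma deriv_symmetricBlaschke_zero {N : ℕ} (hN : N ≠ 0) (a : ℝ) :
    deriv (symmetricBlaschke N a) 0 = a := by
  rw [(hasDerivAt_symmetricBlaschke hN (by simp [hN])).deriv]
  simp [hN]

lemma deriv_symmetricBlaschke_eq_zero_iff {N : ℕ} (hN : N ≠ 0) {a t : ℝ} (ha0 : 0 < a)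
    (ha1 : a < 1) (ht : |t| < 1) (hq : a * t ^ 2 + ((N + 1) - a ^ 2 * (N - 1)) * t + a = 0)
    ⦃w : ℂ⦄ (hw : ‖w‖ < 1) :
    deriv (symmetricBlaschke N a) w = 0 ↔ w ^ N = t := by
  have hden := one_add_mul_pow_ne_zero (N := N) (abs_lt.2 ⟨by linarith, ha1⟩) hw
  have hqC : (a : ℂ) * (t : ℂ) ^ 2 + ((N + 1) - (a : ℂ) ^ 2 * (N - 1)) * t + a = 0 := by
    exact_mod_cast hq
  rw [(hasDerivAt_symmetricBlaschke hN hden).deriv, div_eq_zero_iff,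
    or_iff_left (pow_ne_zero 2 hden)]
  constructor
  · intro hs
    -- `t` and `1 / t` are the two roots, and `t * w ^ N ≠ 1` inside the disk.
    have hfactor : (a : ℂ) * (w ^ N - t) * (w ^ N * t - 1) = 0 := by
      linear_combination (t : ℂ) * hs - w ^ N * hqC
    have hprod : ‖w ^ N * t‖ < 1 := by
      rw [norm_mul, norm_pow, norm_real, Real.norm_eq_abs]
      exact mul_lt_one_of_nonneg_of_lt_one_left (by positivity)
        (pow_lt_one₀ (norm_nonneg w) hw hN) ht.le
    rcases mul_eq_zero.1 hfactor with h | h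
    · exact sub_eq_zero.1 ((mul_eq_zero.1 h).resolve_left (by exact_mod_cast ha0.ne'))
    · rw [sub_eq_zero.1 h, norm_one] at hprod
      exact hprod.false.elim
  · intro hs
    rw [hs]
    linear_combination hqC

lemma symmetricBlaschke_div_eq {N : ℕ} {a t : ℝ} (ht : 1 + a * t ≠ 0) {w : ℂ}
    (hw : w ≠ 0) (hs : w ^ N = t) :
    symmetricBlaschke N a w / (w * a) = ((t + a) / (a * (1 + a * t)) : ℝ) := by
  have ht' : (1 : ℂ) + a * t ≠ 0 := by exact_mod_cast ht
  rw [symmetricBlaschke, hs]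
  push_cast
  field_simp

/-- `K_n ≥ 1` for `n ≥ 3`: for every `ε > 0` there is a finite Blaschke product `B`
of degree `n` with `B(0) = 0`, `B'(0) ≠ 0`, all of whose critical points `ζ` in the
unit disk satisfy `|B(ζ)/(ζ B'(0))| > 1 - ε`. -/
theorem K_n_ge_one (n : ℕ) (hn : 3 ≤ n) (ε : ℝ) (hε : 0 < ε) :
    ∃ (z : Fin (n - 1) → ℂ) (B : ℂ → ℂ),
      (∀ k, ‖z k‖ < 1) ∧
      B = (fun w => w * ∏ k, (w - z k) / (1 - (starRingEnd ℂ) (z k) * w)) ∧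
      deriv B 0 ≠ 0 ∧
      (∃ ζ : ℂ, ‖ζ‖ < 1 ∧ deriv B ζ = 0) ∧
      ∀ ζ : ℂ, ‖ζ‖ < 1 → deriv B ζ = 0 →
        1 - ε < ‖B ζ / (ζ * deriv B 0)‖ := by
  set N := n - 1
  have hN : N ≠ 0 := by omega
  obtain ⟨a, t, ha0, ha1, ht, hq, hratio⟩ :=
    exists_palindromic_root_one_sub_lt_div (m := N) (by norm_cast; omega) hε
  have ht1 : |t| < 1 := abs_lt.2 ⟨ht.1, by linarith [ht.2]⟩
  have hcrit := deriv_symmetricBlaschke_eq_zero_iff hN ha0 ha1 ht1 hq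
  obtain ⟨α, hα, hα1⟩ := exists_pow_eq_of_norm_lt_one hN (x := -a) (by
    rw [norm_neg, norm_real, Real.norm_eq_abs, abs_lt]; constructor <;> linarith)
  have hζ := isPrimitiveRoot_exp N hN
  refine ⟨fun k => cexp (2 * Real.pi * I / N) ^ (k : ℕ) * α, symmetricBlaschke N a, fun k => ?_,
    (blaschke_eq_symmetricBlaschke hN hζ hα).symm, ?_, ?_, fun w hw hw' => ?_⟩
  · simpa [norm_pow, hζ.norm'_eq_one hN] using hα1
  · simpa [deriv_symmetricBlaschke_zero hN] using ha0.ne'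
  · obtain ⟨w, hw, hw1⟩ := exists_pow_eq_of_norm_lt_one hN (x := t) (by simpa using ht1)
    exact ⟨w, hw1, (hcrit hw1).2 hw⟩
  · have hs := (hcrit hw).1 hw'
    have hw0 : w ≠ 0 := by
      rintro rfl
      exact ht.2.ne (by exact_mod_cast hs.symm.trans (zero_pow hN))
    rw [deriv_symmetricBlaschke_zero hN, symmetricBlaschke_div_eq (by nlinarith [ht.1]) hw0 hs,
      norm_real, Real.norm_eq_abs]
    exact hratio.trans_le (le_abs_self _)
end

section
/- K_2 = 1 and the supremum is not attained: for every finite Blaschke product B of degree 2 with B(0) = 0, B'(0) ≠ 0, and critical point ζ ∈ D, one has |B(ζ)/(ζ B'(0))| < 1, yet the supremum over all such B equals 1. -/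
/-!
At a critical point `ζ` of `B(z) = c z (z - a)/(1 - ā z)` one has `2ζ - ā ζ² = a`, and this
collapses the quotient to `B(ζ)/(ζ B'(0)) = 1/(2 - ā ζ)`, whose modulus is `< 1` because
`|ā ζ| < 1`. For real `a = 2t/(1 + t²)` the critical point is `ζ = t` and the quotient is
`(1 + t²)/2`, which tends to `1` as `t → 1⁻`.
-/

open Complex Filter Topology

noncomputable def blaschkeTwo (c a : ℂ) (z : ℂ) : ℂ :=
  c * (z * ((z - a) / (1 - (starRingEnd ℂ) a * z)))

namespace blaschkeTwo

variable {c a z : ℂ}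

theorem hasDerivAt (h : 1 - (starRingEnd ℂ) a * z ≠ 0) :
    HasDerivAt (blaschkeTwo c a)
      (c * ((2 * z - (starRingEnd ℂ) a * z ^ 2 - a) / (1 - (starRingEnd ℂ) a * z) ^ 2)) z := by
  have hden : HasDerivAt (fun w : ℂ => 1 - (starRingEnd ℂ) a * w) (-(starRingEnd ℂ) a) z := by
    simpa using ((hasDerivAt_id z).const_mul ((starRingEnd ℂ) a)).const_sub 1
  refine (((hasDerivAt_id' z).mul (((hasDerivAt_id' z).sub_const a).div hden h)).const_mul c
    ).congr_deriv ?_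
  simp only [Pi.div_apply]
  field_simp
  ring

theorem deriv_eq_zero_iff (hc : c ≠ 0) (h : 1 - (starRingEnd ℂ) a * z ≠ 0) :
    deriv (blaschkeTwo c a) z = 0 ↔ 2 * z - (starRingEnd ℂ) a * z ^ 2 - a = 0 := by
  rw [(hasDerivAt h).deriv]
  simp [hc, h]

theorem deriv_zero : deriv (blaschkeTwo c a) 0 = -(c * a) := by
  rw [(hasDerivAt (by simp)).deriv]
  simp

theorem div_deriv_zero_eq_inv (hc : c ≠ 0) (ha : a ≠ 0) (h : 1 - (starRingEnd ℂ) a * z ≠ 0)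
    (hcrit : 2 * z - (starRingEnd ℂ) a * z ^ 2 - a = 0) :
    blaschkeTwo c a z / (z * deriv (blaschkeTwo c a) 0) = (2 - (starRingEnd ℂ) a * z)⁻¹ := by
  have hfactor : z * (2 - (starRingEnd ℂ) a * z) = a := by linear_combination hcrit
  have hz : z ≠ 0 := left_ne_zero_of_mul (hfactor ▸ ha)
  have htwo : 2 - (starRingEnd ℂ) a * z ≠ 0 := right_ne_zero_of_mul (hfactor ▸ ha)
  rw [deriv_zero, blaschkeTwo]
  rw [mul_comm ((starRingEnd ℂ) a)] at h htwo hcrit ⊢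
  field_simp
  linear_combination -hcrit

end blaschkeTwo

theorem norm_conj_mul_lt_one {a z : ℂ} (ha : ‖a‖ < 1) (hz : ‖z‖ < 1) :
    ‖(starRingEnd ℂ) a * z‖ < 1 := by
  rw [norm_mul, RCLike.norm_conj]
  nlinarith [norm_nonneg a, norm_nonneg z]

theorem one_sub_conj_mul_ne_zero {a z : ℂ} (ha : ‖a‖ < 1) (hz : ‖z‖ < 1) :
    1 - (starRingEnd ℂ) a * z ≠ 0 := by
  intro h
  have := norm_conj_mul_lt_one ha hz
  rw [← sub_eq_zero.mp h, norm_one] at this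
  exact lt_irrefl 1 this

theorem one_lt_norm_two_sub {w : ℂ} (hw : ‖w‖ < 1) : 1 < ‖2 - w‖ := by
  have := norm_sub_norm_le (2 : ℂ) w
  norm_num at this
  linarith

theorem norm_blaschkeTwo_div_lt_one {c a ζ : ℂ} (hc : c ≠ 0) (ha0 : a ≠ 0) (ha1 : ‖a‖ < 1)
    (hζ : ‖ζ‖ < 1) (hcrit : deriv (blaschkeTwo c a) ζ = 0) :
    ‖blaschkeTwo c a ζ / (ζ * deriv (blaschkeTwo c a) 0)‖ < 1 := by
  have hden := one_sub_conj_mul_ne_zero ha1 hζ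
  rw [blaschkeTwo.div_deriv_zero_eq_inv hc ha0 hden
    ((blaschkeTwo.deriv_eq_zero_iff hc hden).mp hcrit), norm_inv]
  exact inv_lt_one_of_one_lt₀ (one_lt_norm_two_sub (norm_conj_mul_lt_one ha1 hζ))

theorem exists_norm_blaschkeTwo_div_eq_one_add_sq_div_two {c : ℂ} (hc : c ≠ 0) {t : ℝ}
    (ht0 : 0 < t) (ht1 : t < 1) :
    ∃ a : ℂ, 0 < ‖a‖ ∧ ‖a‖ < 1 ∧ deriv (blaschkeTwo c a) t = 0 ∧
      ‖blaschkeTwo c a t / (t * deriv (blaschkeTwo c a) 0)‖ = (1 + t ^ 2) / 2 := by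
  have hpos : (0 : ℝ) < 1 + t ^ 2 := by positivity
  set a : ℂ := ((2 * t / (1 + t ^ 2) : ℝ) : ℂ) with ha
  have hnorm : ‖a‖ = 2 * t / (1 + t ^ 2) := by
    rw [ha, norm_real, Real.norm_of_nonneg (by positivity)]
  have ha0 : 0 < ‖a‖ := hnorm ▸ by positivity
  have ha1 : ‖a‖ < 1 := by
    rw [hnorm, div_lt_one hpos]
    nlinarith [sq_pos_of_pos (sub_pos.mpr ht1)]
  have ht : ‖(t : ℂ)‖ < 1 := by rwa [norm_real, Real.norm_of_nonneg ht0.le]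
  have hden := one_sub_conj_mul_ne_zero ha1 ht
  have hposC : 1 + (t : ℂ) ^ 2 ≠ 0 := by exact_mod_cast hpos.ne'
  have hcrit : 2 * (t : ℂ) - (starRingEnd ℂ) a * (t : ℂ) ^ 2 - a = 0 := by
    rw [ha, conj_ofReal]
    push_cast
    field_simp
    ring
  have htwo : 2 - (starRingEnd ℂ) a * t = ((2 / (1 + t ^ 2) : ℝ) : ℂ) := by
    rw [ha, conj_ofReal]
    push_cast
    field_simp
    ring
  refine ⟨a, ha0, ha1, (blaschkeTwo.deriv_eq_zero_iff hc hden).mpr hcrit, ?_⟩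
  rw [blaschkeTwo.div_deriv_zero_eq_inv hc (norm_pos_iff.mp ha0) hden hcrit, htwo, norm_inv,
    norm_real, Real.norm_of_nonneg (by positivity), inv_div]

theorem tendsto_one_add_sq_div_two_nhdsLT_one :
    Tendsto (fun t : ℝ => (1 + t ^ 2) / 2) (𝓝[<] 1) (𝓝 1) :=
  (Continuous.tendsto' (by fun_prop) 1 1 (by norm_num)).mono_left nhdsWithin_le_nhds

/-- `K_2 = 1` and the supremum is not attained: every degree-2 Blaschke product
with `B(0) = 0`, `B'(0) ≠ 0` satisfies `|B(ζ)/(ζ B'(0))| < 1` at its critical point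
`ζ ∈ D`, yet the supremum of these quantities equals `1`. -/
theorem K_two_eq_one :
    (∀ (α : ℝ) (a : ℂ), 0 < ‖a‖ → ‖a‖ < 1 →
      ∀ B : ℂ → ℂ,
        B = (fun z => Complex.exp (α * Complex.I) *
          (z * ((z - a) / (1 - (starRingEnd ℂ) a * z)))) →
        ∀ ζ : ℂ, ‖ζ‖ < 1 → deriv B ζ = 0 →
          ‖B ζ / (ζ * deriv B 0)‖ < 1) ∧
    (∀ ε : ℝ, 0 < ε →
      ∃ (α : ℝ) (a : ℂ) (B : ℂ → ℂ) (ζ : ℂ),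
        0 < ‖a‖ ∧ ‖a‖ < 1 ∧
        B = (fun z => Complex.exp (α * Complex.I) *
          (z * ((z - a) / (1 - (starRingEnd ℂ) a * z)))) ∧
        ‖ζ‖ < 1 ∧ deriv B ζ = 0 ∧
        1 - ε < ‖B ζ / (ζ * deriv B 0)‖) := by
  refine ⟨fun α a ha0 ha1 B hB ζ hζ hcrit => ?_, fun ε hε => ?_⟩
  · have hB : B = blaschkeTwo (exp (α * I)) a := hB
    subst hB
    exact norm_blaschkeTwo_div_lt_one (exp_ne_zero _) (norm_pos_iff.mp ha0) ha1 hζ hcrit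
  · obtain ⟨t, ht_close, ht0, ht1⟩ :=
      ((tendsto_one_add_sq_div_two_nhdsLT_one.eventually
        (lt_mem_nhds (show 1 - ε < 1 by linarith))).and
        (Ioo_mem_nhdsLT (by norm_num : (0 : ℝ) < 1))).exists
    obtain ⟨a, ha0, ha1, hcrit, hratio⟩ :=
      exists_norm_blaschkeTwo_div_eq_one_add_sq_div_two (exp_ne_zero ((0 : ℝ) * I)) ht0 ht1
    refine ⟨0, a, blaschkeTwo (exp ((0 : ℝ) * I)) a, t, ha0, ha1, rfl, ?_, ?_, ?_⟩
    · rwa [norm_real, Real.norm_of_nonneg ht0.le]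
    · exact hcrit
    · rwa [hratio]
end

section
/- Let B be a finite Blaschke product of degree n with B(0) = 0, B'(0) ≠ 0, and suppose r = min over critical points ζ_i in D of |B(ζ_i)| satisfies r ≥ 1/2. Then there exists a critical point ζ_l of B in D with |B(ζ_l)/(ζ_l B'(0))| ≥ 1/2^n. -/
/-!
A critical point exists because `B'` cannot avoid zero on the disk: on the unit circle
`w B'(w) / B(w) = 1 + ∑ₖ (1 - |zₖ|²) / |w - zₖ|²` is real and at least `1`, while `|B(w)| = 1`,
so `|B'| ≥ 1` there, whereas `|B'(0)| = ∏ₖ |zₖ| < 1`; the minimum modulus principle then forces a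
zero of `B'` inside. At such a critical point `ζ` we have `|ζ B'(0)| ≤ 1`, hence
`|B(ζ) / (ζ B'(0))| ≥ |B(ζ)| ≥ 1/2 ≥ 1/2ⁿ`.
-/

open Complex Metric Finset ComplexConjugate

theorem exists_eq_zero_of_norm_lt_of_le_norm_frontier {E : Type*} [NormedAddCommGroup E]
    [NormedSpace ℂ E] [Nontrivial E] {f : E → ℂ} {U : Set E} {c : E} {a : ℝ}
    (hU : Bornology.IsBounded U) (hf : DiffContOnCl ℂ f U) (hfr : ∀ w ∈ frontier U, a ≤ ‖f w‖)
    (hc : c ∈ closure U) (hfc : ‖f c‖ < a) : ∃ w ∈ U, f w = 0 := by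
  by_contra! h
  have ha : 0 < a := (norm_nonneg _).trans_lt hfc
  have hne : ∀ w ∈ closure U, f w ≠ 0 := by
    rw [closure_eq_self_union_frontier]
    rintro w (hw | hw) h0
    · exact h w hw h0
    · have := hfr w hw
      rw [h0, norm_zero] at this
      linarith
  have hinv : ‖(f c)⁻¹‖ ≤ a⁻¹ :=
    Complex.norm_le_of_forall_mem_frontier_norm_le hU (hf.inv hne)
      (fun w hw => by rw [Pi.inv_apply, norm_inv]; exact inv_anti₀ ha (hfr w hw)) hc
  rw [norm_inv, inv_le_inv₀ (norm_pos_iff.2 (hne c hc)) ha] at hinv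
  exact hinv.not_gt hfc

noncomputable def blaschkeFactor (a w : ℂ) : ℂ := (w - a) / (1 - conj a * w)

noncomputable def blaschkeProduct {ι : Type*} [Fintype ι] (z : ι → ℂ) : ℂ → ℂ :=
  fun w => w * ∏ k, blaschkeFactor (z k) w

section BlaschkeFactor

variable {a w : ℂ}

lemma one_sub_conj_mul_ne_zero_s18 (ha : ‖a‖ < 1) (hw : ‖w‖ ≤ 1) : 1 - conj a * w ≠ 0 := by
  intro h
  have hlt : ‖conj a * w‖ < 1 := by
    rw [norm_mul, RCLike.norm_conj]
    nlinarith [norm_nonneg a, norm_nonneg w]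
  rw [← sub_eq_zero.1 h, norm_one] at hlt
  exact hlt.false

lemma one_sub_conj_mul_eq_of_norm_eq_one (hw : ‖w‖ = 1) : 1 - conj a * w = w * conj (w - a) := by
  have hw1 : w * conj w = 1 := by
    rw [mul_conj, normSq_eq_norm_sq, hw]
    norm_num
  rw [map_sub]
  linear_combination -hw1

lemma hasDerivAt_blaschkeFactor (h : 1 - conj a * w ≠ 0) :
    HasDerivAt (blaschkeFactor a) ((1 - conj a * a) / (1 - conj a * w) ^ 2) w := by
  have hnum : HasDerivAt (fun w : ℂ => w - a) 1 w := (hasDerivAt_id w).sub_const a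
  have hden : HasDerivAt (fun w : ℂ => 1 - conj a * w) (-conj a) w := by
    simpa using ((hasDerivAt_id w).const_mul (conj a)).const_sub 1
  refine (hnum.div hden h).congr_deriv ?_
  field_simp
  ring

lemma differentiableAt_blaschkeFactor (h : 1 - conj a * w ≠ 0) :
    DifferentiableAt ℂ (blaschkeFactor a) w :=
  (hasDerivAt_blaschkeFactor h).differentiableAt

@[simp]
lemma blaschkeFactor_zero_right (a : ℂ) : blaschkeFactor a 0 = -a := by
  simp [blaschkeFactor]

lemma norm_blaschkeFactor_of_norm_eq_one (ha : ‖a‖ < 1) (hw : ‖w‖ = 1) :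
    ‖blaschkeFactor a w‖ = 1 := by
  have hwa : w - a ≠ 0 := sub_ne_zero.2 (ne_of_apply_ne norm (by rw [hw]; exact ha.ne'))
  rw [blaschkeFactor, one_sub_conj_mul_eq_of_norm_eq_one hw, norm_div, norm_mul, hw, one_mul,
    RCLike.norm_conj, div_self (norm_ne_zero_iff.2 hwa)]

lemma mul_logDeriv_blaschkeFactor_of_norm_eq_one (ha : ‖a‖ < 1) (hw : ‖w‖ = 1) :
    w * logDeriv (blaschkeFactor a) w = ((1 - ‖a‖ ^ 2) / ‖w - a‖ ^ 2 : ℝ) := by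
  have hw0 : w ≠ 0 := norm_ne_zero_iff.1 (by rw [hw]; norm_num)
  have hden := one_sub_conj_mul_ne_zero_s18 ha hw.le
  have hsq : ∀ u : ℂ, (‖u‖ : ℂ) ^ 2 = u * conj u := fun u => by
    rw [← ofReal_pow, mul_conj, normSq_eq_norm_sq]
  rw [logDeriv_apply, (hasDerivAt_blaschkeFactor hden).deriv, blaschkeFactor]
  push_cast
  rw [hsq, hsq, one_sub_conj_mul_eq_of_norm_eq_one hw]
  field_simp

end BlaschkeFactor

section BlaschkeProduct

variable {ι : Type*} [Fintype ι] {z : ι → ℂ} {w : ℂ}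

lemma differentiableAt_blaschkeProduct (h : ∀ k, 1 - conj (z k) * w ≠ 0) :
    DifferentiableAt ℂ (blaschkeProduct z) w :=
  differentiableAt_id.mul
    (DifferentiableAt.fun_finsetProd fun k _ => differentiableAt_blaschkeFactor (h k))

lemma diffContOnCl_deriv_blaschkeProduct (hz : ∀ k, ‖z k‖ < 1) :
    DiffContOnCl ℂ (deriv (blaschkeProduct z)) (ball 0 1) := by
  set U := {w : ℂ | ∀ k, 1 - conj (z k) * w ≠ 0}
  have hU : IsOpen U := by
    simp only [U, Set.ofPred_forall]
    exact isOpen_iInter_of_finite fun k => isOpen_ne_fun (by fun_prop) continuous_const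
  have hB : DifferentiableOn ℂ (blaschkeProduct z) U := fun w hw =>
    (differentiableAt_blaschkeProduct hw).differentiableWithinAt
  exact (hB.deriv hU).diffContOnCl_ball fun w hw k =>
    one_sub_conj_mul_ne_zero_s18 (hz k) (mem_closedBall_zero_iff.1 hw)

lemma deriv_blaschkeProduct_zero : deriv (blaschkeProduct z) 0 = ∏ k, -z k := by
  have hP : DifferentiableAt ℂ (fun w => ∏ k, blaschkeFactor (z k) w) 0 :=
    DifferentiableAt.fun_finsetProd fun k _ => differentiableAt_blaschkeFactor (by simp)
  unfold blaschkeProduct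
  simpa using ((hasDerivAt_id' (0 : ℂ)).fun_mul hP.hasDerivAt).deriv

lemma norm_deriv_blaschkeProduct_zero_lt_one [Nonempty ι] (hz : ∀ k, ‖z k‖ < 1) :
    ‖deriv (blaschkeProduct z) 0‖ < 1 := by
  classical
  obtain ⟨k₀⟩ := ‹Nonempty ι›
  rw [deriv_blaschkeProduct_zero, norm_prod, ← mul_prod_erase _ _ (mem_univ k₀)]
  have hrest : ∏ k ∈ univ.erase k₀, ‖-z k‖ ≤ 1 :=
    prod_le_one (fun _ _ => norm_nonneg _) fun k _ => by rw [norm_neg]; exact (hz k).le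
  calc ‖-z k₀‖ * ∏ k ∈ univ.erase k₀, ‖-z k‖ ≤ ‖-z k₀‖ * 1 := by gcongr
    _ < 1 := by rw [mul_one, norm_neg]; exact hz k₀

lemma norm_blaschkeProduct_of_norm_eq_one (hz : ∀ k, ‖z k‖ < 1) (hw : ‖w‖ = 1) :
    ‖blaschkeProduct z w‖ = 1 := by
  simp [blaschkeProduct, norm_prod, hw, norm_blaschkeFactor_of_norm_eq_one (hz _) hw]

lemma mul_logDeriv_blaschkeProduct_of_norm_eq_one (hz : ∀ k, ‖z k‖ < 1) (hw : ‖w‖ = 1) :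
    w * logDeriv (blaschkeProduct z) w = ((1 + ∑ k, (1 - ‖z k‖ ^ 2) / ‖w - z k‖ ^ 2 : ℝ) : ℂ) := by
  have hw0 : w ≠ 0 := norm_ne_zero_iff.1 (by rw [hw]; norm_num)
  have hden k := one_sub_conj_mul_ne_zero_s18 (hz k) hw.le
  have hf k : blaschkeFactor (z k) w ≠ 0 :=
    norm_ne_zero_iff.1 (by rw [norm_blaschkeFactor_of_norm_eq_one (hz k) hw]; norm_num)
  have hd k := differentiableAt_blaschkeFactor (hden k)
  unfold blaschkeProduct
  rw [logDeriv_mul (f := fun w => w) w hw0 (prod_ne_zero_iff.2 fun k _ => hf k)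
      differentiableAt_id (DifferentiableAt.fun_finsetProd fun k _ => hd k),
    logDeriv_prod (fun k _ => hf k) (fun k _ => hd k), logDeriv_id', mul_add, mul_sum]
  push_cast
  rw [mul_one_div_cancel hw0]
  simp only [mul_logDeriv_blaschkeFactor_of_norm_eq_one (hz _) hw, ofReal_div, ofReal_sub,
    ofReal_one, ofReal_pow]

lemma one_le_norm_deriv_blaschkeProduct (hz : ∀ k, ‖z k‖ < 1) (hw : ‖w‖ = 1) :
    1 ≤ ‖deriv (blaschkeProduct z) w‖ := by
  have hB := norm_blaschkeProduct_of_norm_eq_one hz hw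
  have hsum : 0 ≤ ∑ k, (1 - ‖z k‖ ^ 2) / ‖w - z k‖ ^ 2 :=
    sum_nonneg fun k _ => div_nonneg (by nlinarith [hz k, norm_nonneg (z k)]) (by positivity)
  have hderiv : deriv (blaschkeProduct z) w =
      blaschkeProduct z w * logDeriv (blaschkeProduct z) w := by
    rw [logDeriv_apply, mul_div_cancel₀ _ (norm_ne_zero_iff.1 (by rw [hB]; norm_num))]
  calc (1 : ℝ) ≤ |1 + ∑ k, (1 - ‖z k‖ ^ 2) / ‖w - z k‖ ^ 2| := by
        rw [abs_of_nonneg (by linarith)]; linarith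
    _ = ‖w * logDeriv (blaschkeProduct z) w‖ := by
        rw [mul_logDeriv_blaschkeProduct_of_norm_eq_one hz hw, norm_real, Real.norm_eq_abs]
    _ = ‖deriv (blaschkeProduct z) w‖ := by rw [hderiv, norm_mul, norm_mul, hB, hw]

theorem exists_deriv_blaschkeProduct_eq_zero [Nonempty ι] (hz : ∀ k, ‖z k‖ < 1) :
    ∃ ζ ∈ ball (0 : ℂ) 1, deriv (blaschkeProduct z) ζ = 0 :=
  exists_eq_zero_of_norm_lt_of_le_norm_frontier isBounded_ball
    (diffContOnCl_deriv_blaschkeProduct hz)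
    (fun w hw => one_le_norm_deriv_blaschkeProduct hz <| by
      rwa [frontier_ball 0 one_ne_zero, mem_sphere_zero_iff_norm] at hw)
    (subset_closure (mem_ball_self one_pos)) (norm_deriv_blaschkeProduct_zero_lt_one hz)

end BlaschkeProduct

/-- If every critical value of `B` in the unit disk has modulus at least `1/2`,
then some critical point `ζ_l` satisfies `|B(ζ_l)/(ζ_l B'(0))| ≥ 1/2^n`. -/
theorem prop_lower_bound (n : ℕ) (hn : 2 ≤ n) (z : Fin (n - 1) → ℂ)
    (hz : ∀ k, ‖z k‖ < 1)
    (B : ℂ → ℂ)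
    (hB : B = fun w => w * ∏ k, (w - z k) / (1 - (starRingEnd ℂ) (z k) * w))
    (hB0 : deriv B 0 ≠ 0)
    (hr : ∀ ζ : ℂ, ‖ζ‖ < 1 → deriv B ζ = 0 → (1 / 2 : ℝ) ≤ ‖B ζ‖) :
    ∃ ζ : ℂ, ‖ζ‖ < 1 ∧ deriv B ζ = 0 ∧
      (1 / 2 ^ n : ℝ) ≤ ‖B ζ / (ζ * deriv B 0)‖ := by
  obtain rfl : B = blaschkeProduct z := hB
  have : Nonempty (Fin (n - 1)) := ⟨⟨0, by omega⟩⟩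
  obtain ⟨ζ, hζ, hcrit⟩ := exists_deriv_blaschkeProduct_eq_zero hz
  rw [mem_ball_zero_iff] at hζ
  refine ⟨ζ, hζ, hcrit, ?_⟩
  have hζ0 : ζ ≠ 0 := by
    rintro rfl
    exact hB0 hcrit
  have hden : ‖ζ * deriv (blaschkeProduct z) 0‖ ≤ 1 := by
    rw [norm_mul]
    exact mul_le_one₀ hζ.le (norm_nonneg _) (norm_deriv_blaschkeProduct_zero_lt_one hz).le
  calc (1 / 2 ^ n : ℝ) ≤ 1 / 2 := by
        gcongr
        exact le_self_pow₀ one_le_two (by omega)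
    _ ≤ ‖blaschkeProduct z ζ‖ := hr ζ hζ hcrit
    _ ≤ ‖blaschkeProduct z ζ‖ / ‖ζ * deriv (blaschkeProduct z) 0‖ :=
        le_div_self (norm_nonneg _) (norm_pos_iff.2 (mul_ne_zero hζ0 hB0)) hden
    _ = _ := (norm_div _ _).symm
end
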